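/- For N random variables each taking values in a set of cardinality K, the sum of multi-information and binding information is at most N log K: I(X_A) + B(X_A) ≤ N log K. -/
import Mathlib


open scoped Classical
open Finset Real

noncomputable section

/-- Probability of the event `X = s` under weights `p` on a finite sample space. -/
def pr {Ω : Type*} [Fintype Ω] (p : Ω → ℝ) {S : Type*} (X : Ω → S) (s : S) : ℝ :=
  ∑ ω, if X ω = s then p ω else 0

/-- Shannon entropy of a finitely-valued random variable `X`. -/
def ent {Ω : Type*} [Fintype Ω] (p : Ω → ℝ) {S : Type*} [Fintype S] (X : Ω → S) : ℝ :=
  ∑ s, Real.negMulLog (pr p X s)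

/-- Conditional entropy `H(X | Y)`. -/
def condEnt {Ω : Type*} [Fintype Ω] (p : Ω → ℝ) {S T : Type*} [Fintype S] [Fintype T]
    (X : Ω → S) (Y : Ω → T) : ℝ :=
  ent p (fun ω => (X ω, Y ω)) - ent p Y

/-- The joint random variable of a finite family. -/
def jointVar {Ω : Type*} {A : Type*} {S : A → Type*} (X : ∀ α, Ω → S α) :
    Ω → ∀ α, S α :=
  fun ω α => X α ω

/-- The tuple of all variables except `α`. -/
def restVar {Ω : Type*} {A : Type*} {S : A → Type*} (X : ∀ α, Ω → S α) (α : A) :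
    Ω → ∀ β : {β : A // β ≠ α}, S β.1 :=
  fun ω β => X β.1 ω

/-- Binding information `B(X_A)`. -/
def bindingInfo {Ω : Type*} [Fintype Ω] (p : Ω → ℝ) {A : Type*} [Fintype A]
    {S : A → Type*} [∀ α, Fintype (S α)] (X : ∀ α, Ω → S α) : ℝ :=
  ent p (jointVar X) - ∑ α, condEnt p (X α) (restVar X α)

/-- Multi-information `I(X_A)`. -/
def multiInfo {Ω : Type*} [Fintype Ω] (p : Ω → ℝ) {A : Type*} [Fintype A]
    {S : A → Type*} [∀ α, Fintype (S α)] (X : ∀ α, Ω → S α) : ℝ :=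
  (∑ α, ent p (X α)) - ent p (jointVar X)

lemma pr_nonneg {Ω : Type*} [Fintype Ω] {p : Ω → ℝ} (hp : ∀ ω, 0 ≤ p ω) {S : Type*}
    (X : Ω → S) (s : S) : 0 ≤ pr p X s := by
  refine Finset.sum_nonneg fun ω _ => ?_
  split_ifs; exacts [hp ω, le_rfl]

lemma sum_pr {Ω : Type*} [Fintype Ω] (p : Ω → ℝ) {S : Type*} [Fintype S] (X : Ω → S) :
    ∑ s, pr p X s = ∑ ω, p ω := by
  unfold pr
  rw [Finset.sum_comm]
  simp [Finset.sum_ite_eq]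

lemma pr_marginal {Ω : Type*} [Fintype Ω] (p : Ω → ℝ) {S T : Type*} [Fintype S]
    (X : Ω → S) (Y : Ω → T) (t : T) :
    pr p Y t = ∑ s, pr p (fun ω => (X ω, Y ω)) (s, t) := by
  unfold pr
  rw [Finset.sum_comm]
  congr 1; ext ω
  simp [Prod.ext_iff, ite_and, Finset.sum_ite_eq]

lemma negMulLog_sum_le {ι : Type*} (s : Finset ι) (f : ι → ℝ) (hf : ∀ i ∈ s, 0 ≤ f i) :
    Real.negMulLog (∑ i ∈ s, f i) ≤ ∑ i ∈ s, Real.negMulLog (f i) := by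
  have hT : Real.negMulLog (∑ i ∈ s, f i) = ∑ i ∈ s, -(f i) * Real.log (∑ j ∈ s, f j) := by
    rw [Real.negMulLog, ← Finset.sum_neg_distrib, Finset.sum_mul]
  rw [hT]
  refine Finset.sum_le_sum fun i hi => ?_
  rcases eq_or_lt_of_le (hf i hi) with h0 | h0
  · simp [← h0]
  · have hle : f i ≤ ∑ j ∈ s, f j := Finset.single_le_sum hf hi
    have := Real.log_le_log h0 hle
    rw [Real.negMulLog, neg_mul, neg_mul, neg_le_neg_iff]
    exact mul_le_mul_of_nonneg_left this h0.le

lemma negMulLog_le_aux {q : ℝ} (hq : 0 ≤ q) {n : ℝ} (hn : 0 < n) :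
    Real.negMulLog q ≤ q * Real.log n + (1 / n - q) := by
  rcases eq_or_lt_of_le hq with h0 | h0
  · simp [← h0]; positivity
  · have h1 : (0:ℝ) < (q * n)⁻¹ := by positivity
    have h2 := Real.log_le_sub_one_of_pos h1
    have h3 : Real.log (q * n)⁻¹ = -Real.log q - Real.log n := by
      rw [Real.log_inv, Real.log_mul h0.ne' hn.ne']; ring
    rw [h3] at h2
    have h5 : q * (q * n)⁻¹ = 1 / n := by field_simp
    have h4 := mul_le_mul_of_nonneg_left h2 h0.le
    rw [Real.negMulLog]
    nlinarith [h4, h5]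

lemma ent_le_log_card {Ω : Type*} [Fintype Ω] {p : Ω → ℝ} (hp : ∀ ω, 0 ≤ p ω)
    (hsum : ∑ ω, p ω = 1) {S : Type*} [Fintype S] [Nonempty S] (X : Ω → S) :
    ent p X ≤ Real.log (Fintype.card S) := by
  have hn : (0:ℝ) < (Fintype.card S : ℝ) := by
    exact_mod_cast Fintype.card_pos
  have step : ent p X ≤ ∑ s, (pr p X s * Real.log (Fintype.card S)
      + (1 / (Fintype.card S : ℝ) - pr p X s)) := by
    refine Finset.sum_le_sum fun s _ => negMulLog_le_aux (pr_nonneg hp X s) hn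
  refine step.trans ?_
  rw [Finset.sum_add_distrib, ← Finset.sum_mul, Finset.sum_sub_distrib, sum_pr, hsum,
    Finset.sum_const, Finset.card_univ, nsmul_eq_mul]
  rw [mul_one_div, div_self hn.ne']
  simp

lemma condEnt_nonneg {Ω : Type*} [Fintype Ω] {p : Ω → ℝ} (hp : ∀ ω, 0 ≤ p ω)
    {S T : Type*} [Fintype S] [Fintype T] (X : Ω → S) (Y : Ω → T) :
    0 ≤ condEnt p X Y := by
  rw [condEnt, sub_nonneg, ent, ent]
  calc ∑ t, Real.negMulLog (pr p Y t)
      = ∑ t, Real.negMulLog (∑ s, pr p (fun ω => (X ω, Y ω)) (s, t)) := by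
        simp_rw [pr_marginal p X Y]
    _ ≤ ∑ t, ∑ s, Real.negMulLog (pr p (fun ω => (X ω, Y ω)) (s, t)) := by
        refine Finset.sum_le_sum fun t _ => negMulLog_sum_le _ _ fun s _ => pr_nonneg hp _ _
    _ = ∑ x : S × T, Real.negMulLog (pr p (fun ω => (X ω, Y ω)) x) := by
        rw [Fintype.sum_prod_type_right]

/-- `I(X_A) + B(X_A) ≤ N log K`. -/
theorem multiInfo_add_bindingInfo_le {Ω : Type*} [Fintype Ω] (p : Ω → ℝ)
    (hp : ∀ ω, 0 ≤ p ω) (hsum : ∑ ω, p ω = 1)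
    {A : Type*} [Fintype A] {S : A → Type*} [∀ α, Fintype (S α)]
    (K : ℕ) (hK : ∀ α, Fintype.card (S α) = K)
    (X : ∀ α, Ω → S α) :
    multiInfo p X + bindingInfo p X ≤ (Fintype.card A : ℝ) * Real.log K := by
  have hΩ : Nonempty Ω := by
    by_contra h
    rw [not_nonempty_iff] at h
    simp at hsum
  have key : multiInfo p X + bindingInfo p X
      = ∑ α, (ent p (X α) - condEnt p (X α) (restVar X α)) := by
    rw [multiInfo, bindingInfo, Finset.sum_sub_distrib]; ring
  rw [key]
  have bound : ∀ α : A, ent p (X α) - condEnt p (X α) (restVar X α) ≤ Real.log K := by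
    intro α
    have : Nonempty (S α) := Nonempty.map (X α) hΩ
    have h1 : ent p (X α) ≤ Real.log K := by
      have := ent_le_log_card hp hsum (X α)
      rwa [hK α] at this
    linarith [condEnt_nonneg hp (X α) (restVar X α)]
  calc ∑ α, (ent p (X α) - condEnt p (X α) (restVar X α))
      ≤ ∑ _α : A, Real.log K := Finset.sum_le_sum fun α _ => bound α
    _ = (Fintype.card A : ℝ) * Real.log K := by
        rw [Finset.sum_const, Finset.card_univ, nsmul_eq_mul]
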